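/- arXiv:1706.00350 — 9 statements merged into one kernel-verified Lean document; each statement's English description precedes it below -/
import Mathlib

section
/- Let N ≥ 2, 1 ≤ M < N, and D ≥ 1 be integers. For every τ ∈ (0,1) with τ < 1-((N-1)/(N-1+D))^{1/D}, the derivative satisfies P_D'(τ) > 0; moreover P_D'(τ) < 0 for all τ sufficiently close to 1 (i.e., the limit of P_D'(τ) as τ → 1⁻ is negative or −∞, and in particular there exists τ₀ ∈ (0,1) such that P_D'(τ) < 0 for all τ ∈ (τ₀,1)). -/
/-!
The sum `S = ∑_{i<M} b_{N-1,i}` of Bernstein polynomials `b_{n,i} = C(n,i) τ^i (1-τ)^(n-i)`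
has the telescoping derivative `S' = -(N-1) b_{N-2,M-1}`, so every term of
`P' = D (1-τ)^(D-1) S + (1 - (1-τ)^D) S'` carries the factor `(1-τ)^(N-1-M)`, and
`P' = (1-τ)^(N-1-M) g` for a polynomial `g`. Keeping only the term `i = M-1` of `S` gives,
with `x = (1-τ)^D`, `g τ ≥ C(N-2,M-1) τ^(M-1) (D x - (N-1)(1-x))`, which is positive exactly
when `x > (N-1)/(N-1+D)`, i.e. below the threshold. On the other hand
`g 1 = -(N-1) C(N-2,M-1) < 0`, so `P' < 0` near `1` by continuity.
-/

open Finset Set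

noncomputable def P (N M D : ℕ) (τ : ℝ) : ℝ :=
  (1 - (1 - τ)^D) * ∑ i ∈ range M, ((N-1).choose i : ℝ) * τ^i * (1-τ)^(N-1-i)

open Polynomial Topology

theorem bernsteinPolynomial.derivative_sum_range_succ (R : Type*) [CommRing R] (n m : ℕ) :
    derivative (∑ ν ∈ range (m + 1), bernsteinPolynomial R n ν) =
      -n * bernsteinPolynomial R (n - 1) m := by
  induction m with
  | zero => simp [derivative_zero]
  | succ m ih => rw [sum_range_succ, derivative_add, ih, derivative_succ]; ring

section

variable (N M D : ℕ)

theorem P_eq_eval :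
    P N M D = fun τ ↦
      ((1 - (1 - X) ^ D) * ∑ ν ∈ range M, bernsteinPolynomial ℝ (N - 1) ν).eval τ := by
  ext τ
  simp [P, bernsteinPolynomial, eval_finsetSum]

noncomputable def derivPCofactor (τ : ℝ) : ℝ :=
  D * (1 - τ) ^ (D - 1) * ∑ i ∈ range M, ((N - 1).choose i : ℝ) * τ ^ i * (1 - τ) ^ (M - i)
    - (1 - (1 - τ) ^ D) * (((N - 1 : ℕ) : ℝ) * (N - 2).choose (M - 1) * τ ^ (M - 1))

theorem deriv_P (hM : 1 ≤ M) (hMN : M < N) (τ : ℝ) :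
    deriv (P N M D) τ = (1 - τ) ^ (N - 1 - M) * derivPCofactor N M D τ := by
  obtain ⟨m, rfl⟩ : ∃ m, M = m + 1 := ⟨M - 1, by omega⟩
  have hS : ∑ i ∈ range (m + 1), ((N - 1).choose i : ℝ) * τ ^ i * (1 - τ) ^ (N - 1 - i) =
      (1 - τ) ^ (N - 1 - (m + 1)) *
        ∑ i ∈ range (m + 1), ((N - 1).choose i : ℝ) * τ ^ i * (1 - τ) ^ (m + 1 - i) := by
    rw [mul_sum]
    refine sum_congr rfl fun i hi ↦ ?_
    rw [show N - 1 - i = N - 1 - (m + 1) + (m + 1 - i) by simp at hi; omega, pow_add]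
    ring
  rw [P_eq_eval, Polynomial.deriv, derivative_mul, bernsteinPolynomial.derivative_sum_range_succ]
  simp only [derivPCofactor, bernsteinPolynomial, eval_add, eval_mul, eval_finsetSum, eval_neg,
    eval_sub, eval_pow, eval_one, eval_X, eval_natCast, eval_C, eval_zero, derivative_sub,
    derivative_one, derivative_pow, derivative_X]
  rw [hS, show N - 1 - 1 - m = N - 1 - (m + 1) by omega, show N - 1 - 1 = N - 2 by omega,
    Nat.add_sub_cancel]
  ring

theorem derivPCofactor_one (hD : 1 ≤ D) :
    derivPCofactor N M D 1 = -(((N - 1 : ℕ) : ℝ) * (N - 2).choose (M - 1)) := by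
  have hsum : ∑ i ∈ range M, ((N - 1).choose i : ℝ) * 0 ^ (M - i) = 0 :=
    sum_eq_zero fun i hi ↦ by simp at hi; simp [zero_pow (by omega : M - i ≠ 0)]
  simp [derivPCofactor, hsum, zero_pow (by omega : D ≠ 0)]

theorem continuous_derivPCofactor : Continuous (derivPCofactor N M D) := by
  unfold derivPCofactor; fun_prop

theorem derivPCofactor_pos (hM : 1 ≤ M) (hMN : M < N) (hD : 1 ≤ D) {τ : ℝ}
    (hτ0 : 0 < τ) (hτ1 : τ < 1)
    (h : ((N - 1 : ℕ) : ℝ) * (1 - (1 - τ) ^ D) < D * (1 - τ) ^ D) :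
    0 < derivPCofactor N M D τ := by
  set x := (1 - τ) ^ D
  have hc : (0 : ℝ) < (N - 2).choose (M - 1) := by exact_mod_cast Nat.choose_pos (by omega)
  have hcc : ((N - 2).choose (M - 1) : ℝ) ≤ (N - 1).choose (M - 1) := by
    exact_mod_cast Nat.choose_le_choose _ (by omega)
  have hterm : ((N - 1).choose (M - 1) : ℝ) * τ ^ (M - 1) * (1 - τ) ≤
      ∑ i ∈ range M, ((N - 1).choose i : ℝ) * τ ^ i * (1 - τ) ^ (M - i) := by
    have := single_le_sum (f := fun i ↦ ((N - 1).choose i : ℝ) * τ ^ i * (1 - τ) ^ (M - i))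
      (fun i _ ↦ by have := sub_nonneg.2 hτ1.le; positivity)
      (mem_range.2 (by omega : M - 1 < M))
    simpa [show M - (M - 1) = 1 by omega] using this
  have hx : (D : ℝ) * (1 - τ) ^ (D - 1) * (1 - τ) = D * x := by
    rw [mul_assoc, ← pow_succ, Nat.sub_add_cancel hD]
  have ht : 0 < τ ^ (M - 1) := pow_pos hτ0 _
  have hx0 : 0 < x := pow_pos (by linarith) _
  unfold derivPCofactor
  calc 0 < τ ^ (M - 1) * (N - 2).choose (M - 1) * (D * x - (N - 1 : ℕ) * (1 - x)) := by
        have := mul_pos ht hc; nlinarith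
    _ ≤ D * x * ((N - 1).choose (M - 1) * τ ^ (M - 1))
          - (1 - x) * ((N - 1 : ℕ) * (N - 2).choose (M - 1) * τ ^ (M - 1)) := by
        nlinarith [mul_le_mul_of_nonneg_left hcc (mul_pos ht hx0).le]
    _ ≤ _ := by
        gcongr ?_ - _
        rw [← hx]
        have hDa : (0 : ℝ) ≤ D * (1 - τ) ^ (D - 1) := by positivity
        nlinarith [mul_le_mul_of_nonneg_left hterm hDa]

theorem mul_one_sub_pow_lt_of_lt_one_sub_rpow {n τ : ℝ} (hn : 0 ≤ n) {D : ℕ} (hD : 1 ≤ D)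
    (h : τ < 1 - (n / (n + D)) ^ ((1 : ℝ) / D)) : n * (1 - (1 - τ) ^ D) < D * (1 - τ) ^ D := by
  have hD0 : (0 : ℝ) < D := by exact_mod_cast hD
  have hr : 0 ≤ n / (n + D) := by positivity
  have hlt : n / (n + D) < (1 - τ) ^ D := by
    calc n / (n + D) = ((n / (n + D)) ^ ((1 : ℝ) / D)) ^ D := by
          rw [one_div, Real.rpow_inv_natCast_pow hr (by omega)]
      _ < (1 - τ) ^ D := pow_lt_pow_left₀ (by linarith) (by positivity) (by omega)
  rw [div_lt_iff₀ (by positivity)] at hlt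
  linarith

theorem eventually_deriv_P_neg (hM : 1 ≤ M) (hMN : M < N) (hD : 1 ≤ D) :
    ∀ᶠ τ in 𝓝[<] 1, deriv (P N M D) τ < 0 := by
  have hneg : derivPCofactor N M D 1 < 0 := by
    rw [derivPCofactor_one N M D hD, neg_lt_zero]
    have : 0 < (N - 2).choose (M - 1) := Nat.choose_pos (by omega)
    have : 0 < N - 1 := by omega
    positivity
  have hnear := (continuous_derivPCofactor N M D).continuousAt.eventually_lt continuousAt_const hneg
  filter_upwards [nhdsWithin_le_nhds hnear, self_mem_nhdsWithin] with τ hτ hτ1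
  rw [deriv_P N M D hM hMN]
  exact mul_neg_of_pos_of_neg (pow_pos (sub_pos.2 hτ1) _) hτ

end

theorem stmt2_general (N M D : ℕ) (hM : 1 ≤ M) (hMN : M < N) (hD : 1 ≤ D) :
    (∀ τ ∈ Ioo (0:ℝ) 1,
        τ < 1 - (((N:ℝ)-1)/((N:ℝ)-1+(D:ℝ))) ^ ((1:ℝ)/(D:ℝ)) →
        0 < deriv (P N M D) τ) ∧
    ∃ τ₀ ∈ Ioo (0:ℝ) 1, ∀ τ ∈ Ioo τ₀ 1, deriv (P N M D) τ < 0 := by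
  refine ⟨fun τ hτ hlt ↦ ?_, ?_⟩
  · have hN : ((N - 1 : ℕ) : ℝ) = N - 1 := by rw [Nat.cast_sub (by omega), Nat.cast_one]
    rw [deriv_P N M D hM hMN]
    refine mul_pos (pow_pos (sub_pos.2 hτ.2) _)
      (derivPCofactor_pos N M D hM hMN hD hτ.1 hτ.2 ?_)
    rw [hN]
    exact mul_one_sub_pow_lt_of_lt_one_sub_rpow (by rw [← hN]; positivity) hD hlt
  · obtain ⟨l, hl, hsub⟩ :=
      (mem_nhdsLT_iff_exists_mem_Ico_Ioo_subset (by norm_num : (1 / 2 : ℝ) < 1)).1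
        (eventually_deriv_P_neg N M D hM hMN hD)
    exact ⟨l, ⟨by linarith [hl.1], hl.2⟩, hsub⟩

theorem stmt2 (N M D : ℕ) (hN : 2 ≤ N) (hM : 1 ≤ M) (hMN : M < N) (hD : 1 ≤ D) :
    (∀ τ ∈ Ioo (0:ℝ) 1,
        τ < 1 - (((N:ℝ)-1)/((N:ℝ)-1+(D:ℝ))) ^ ((1:ℝ)/(D:ℝ)) →
        0 < deriv (P N M D) τ) ∧
    ∃ τ₀ ∈ Ioo (0:ℝ) 1, ∀ τ ∈ Ioo τ₀ 1, deriv (P N M D) τ < 0 :=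
  stmt2_general N M D hM hMN hD
end

section
/- Let N and M be integers with 2 ≤ M < N. For every τ ∈ (0,1), the derivative of H_1 satisfies H_1'(τ) < N-1. -/
open Finset Set

noncomputable def f1 (N M : ℕ) (τ : ℝ) : ℝ :=
  ∑ i ∈ range M, ((N-1).choose i : ℝ) * τ^i * (1-τ)^(N-1-i)

noncomputable def f2 (N M : ℕ) (τ : ℝ) : ℝ :=
  ∑ i ∈ range M, (i : ℝ) * ((N-1).choose i : ℝ) * τ^i * (1-τ)^(N-1-i)

noncomputable def H1 (N M : ℕ) (τ : ℝ) : ℝ := f2 N M τ / f1 N M τ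

/-!
Write `n = N - 1`, `b ν = bernsteinPolynomial ℝ n ν`, so that `f₁ = ∑_{ν<M} b ν` and
`f₂ = ∑_{ν<M} ν b ν`. Every Bernstein polynomial satisfies the Euler-type identity
`X (1 - X) b' = (ν - n X) b`; summed over `ν < M` it expresses both `f₁'` and `f₂` through the
single polynomial `q = bernsteinPolynomial ℝ (n - 1) (M - 1)`:
`f₁' = -n q` and `n X f₁ - f₂ = n X (1 - X) q`. The quotient rule then gives
`f₁² (H₁' - n) = n q ((X - M) f₁ + f₂)`, which is negative on `(0, 1)` since
`f₂ ≤ (M - 1) f₁`.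
-/

open Polynomial

namespace Polynomial

variable {R : Type*} [CommRing R]

theorem X_mul_derivative_X_pow (n : ℕ) : X * derivative (X ^ n : R[X]) = (n : R[X]) * X ^ n := by
  cases n with
  | zero => simp
  | succ n =>
    rw [derivative_X_pow, Nat.add_sub_cancel, C_eq_natCast, pow_succ]
    ring

theorem one_sub_X_mul_derivative_one_sub_X_pow (n : ℕ) :
    (1 - X) * derivative ((1 - X) ^ n : R[X]) = -(n : R[X]) * (1 - X) ^ n := by
  cases n with
  | zero => simp
  | succ n =>
    rw [derivative_pow, Nat.add_sub_cancel, C_eq_natCast, pow_succ, derivative_sub,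
      derivative_one, derivative_X]
    ring

end Polynomial

namespace bernsteinPolynomial

section CommRing

variable {R : Type*} [CommRing R]

theorem X_mul_one_sub_X_mul_derivative (n ν : ℕ) :
    X * (1 - X) * derivative (bernsteinPolynomial R n ν) =
      ((ν : R[X]) - (n : R[X]) * X) * bernsteinPolynomial R n ν := by
  rcases lt_or_ge n ν with h | h
  · simp [eq_zero_of_lt R h]
  have hX := X_mul_derivative_X_pow (R := R) ν
  have hY := one_sub_X_mul_derivative_one_sub_X_pow (R := R) (n - ν)
  rw [Nat.cast_sub h] at hY
  simp only [bernsteinPolynomial, derivative_mul, derivative_natCast, zero_mul, zero_add]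
  linear_combination ((n.choose ν : R[X]) * (1 - X) ^ (n - ν) * (1 - X)) * hX +
    ((n.choose ν : R[X]) * X ^ ν * X) * hY

theorem derivative_sum_range_succ_s5 (n k : ℕ) :
    derivative (∑ ν ∈ range (k + 1), bernsteinPolynomial R (n + 1) ν) =
      -((n : R[X]) + 1) * bernsteinPolynomial R n k := by
  induction k with
  | zero => simp [derivative_zero]
  | succ k ih =>
    rw [sum_range_succ, derivative_add, ih, derivative_succ_aux]
    ring

theorem sum_range_succ_mul_sub (n k : ℕ) :
    ∑ ν ∈ range (k + 1),
        (((n : R[X]) + 1) * X - (ν : R[X])) * bernsteinPolynomial R (n + 1) ν =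
      ((n : R[X]) + 1) * X * (1 - X) * bernsteinPolynomial R n k := by
  have h := congrArg (X * (1 - X) * ·) (derivative_sum_range_succ_s5 (R := R) n k)
  simp only [derivative_sum, mul_sum, X_mul_one_sub_X_mul_derivative] at h
  rw [← neg_inj, ← sum_neg_distrib]
  convert h using 1
  · push_cast
    exact sum_congr rfl fun ν _ => by ring
  · ring

theorem derivative_X_mul_one_sub_X_mul (n k : ℕ) :
    derivative (X * (1 - X) * bernsteinPolynomial R n k) =
      ((k : R[X]) + 1 - ((n : R[X]) + 2) * X) * bernsteinPolynomial R n k := by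
  have h := X_mul_one_sub_X_mul_derivative (R := R) n k
  simp only [derivative_mul, derivative_X, derivative_sub, derivative_one]
  linear_combination h

theorem derivative_mul_sub_mul_derivative_sum_range_succ (n k : ℕ) :
    derivative (∑ ν ∈ range (k + 1), (ν : R[X]) * bernsteinPolynomial R (n + 1) ν) *
        ∑ ν ∈ range (k + 1), bernsteinPolynomial R (n + 1) ν -
      (∑ ν ∈ range (k + 1), (ν : R[X]) * bernsteinPolynomial R (n + 1) ν) *
        derivative (∑ ν ∈ range (k + 1), bernsteinPolynomial R (n + 1) ν) =
      ((n : R[X]) + 1) * (∑ ν ∈ range (k + 1), bernsteinPolynomial R (n + 1) ν) ^ 2 +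
        ((n : R[X]) + 1) * bernsteinPolynomial R n k *
          ((X - ((k : R[X]) + 1)) * ∑ ν ∈ range (k + 1), bernsteinPolynomial R (n + 1) ν +
            ∑ ν ∈ range (k + 1), (ν : R[X]) * bernsteinPolynomial R (n + 1) ν) := by
  set A := ∑ ν ∈ range (k + 1), bernsteinPolynomial R (n + 1) ν
  set F := ∑ ν ∈ range (k + 1), (ν : R[X]) * bernsteinPolynomial R (n + 1) ν
  have hF : F = ((n : R[X]) + 1) * X * A -
      ((n : R[X]) + 1) * (X * (1 - X) * bernsteinPolynomial R n k) := by
    rw [← mul_assoc, ← mul_assoc, ← sum_range_succ_mul_sub, mul_sum, ← sum_sub_distrib]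
    exact sum_congr rfl fun ν _ => by ring
  have hA' : derivative A = -((n : R[X]) + 1) * bernsteinPolynomial R n k :=
    derivative_sum_range_succ_s5 n k
  have hF' : derivative F =
      ((n : R[X]) + 1) * A -
        ((n : R[X]) + 1) * ((k : R[X]) + 1 - X) * bernsteinPolynomial R n k := by
    rw [hF, derivative_sub, derivative_mul (f := _ * X), derivative_mul (g := X * (1 - X) * _),
      derivative_X_mul_one_sub_X_mul, hA']
    simp only [derivative_mul, derivative_add, derivative_natCast, derivative_one, derivative_X]
    ring
  rw [hF', hA']
  ring

end CommRing

section OrderedRing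

variable {R : Type*} [CommRing R] [LinearOrder R] [IsStrictOrderedRing R]

theorem eval_nonneg (n ν : ℕ) {x : R} (h0 : 0 ≤ x) (h1 : x ≤ 1) :
    0 ≤ (bernsteinPolynomial R n ν).eval x := by
  have : 0 ≤ 1 - x := sub_nonneg.2 h1
  simp only [bernsteinPolynomial, eval_mul, eval_natCast, eval_pow, eval_X, eval_sub, eval_one]
  positivity

theorem eval_pos {n ν : ℕ} (h : ν ≤ n) {x : R} (h0 : 0 < x) (h1 : x < 1) :
    0 < (bernsteinPolynomial R n ν).eval x := by
  have : 0 < 1 - x := sub_pos.2 h1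
  have : (0 : R) < n.choose ν := Nat.cast_pos.2 (Nat.choose_pos h)
  simp only [bernsteinPolynomial, eval_mul, eval_natCast, eval_pow, eval_X, eval_sub, eval_one]
  positivity

theorem eval_sum_range_pos (n : ℕ) {m : ℕ} (hm : 0 < m) {x : R} (h0 : 0 < x) (h1 : x < 1) :
    0 < (∑ ν ∈ range m, bernsteinPolynomial R n ν).eval x := by
  rw [eval_finsetSum]
  exact sum_pos' (fun ν _ => eval_nonneg n ν h0.le h1.le)
    ⟨0, mem_range.2 hm, eval_pos (Nat.zero_le n) h0 h1⟩

theorem eval_sum_range_succ_natCast_mul_le (n k : ℕ) {x : R} (h0 : 0 ≤ x) (h1 : x ≤ 1) :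
    (∑ ν ∈ range (k + 1), (ν : R[X]) * bernsteinPolynomial R n ν).eval x ≤
      k * (∑ ν ∈ range (k + 1), bernsteinPolynomial R n ν).eval x := by
  simp only [eval_finsetSum, eval_mul, eval_natCast, mul_sum]
  refine sum_le_sum fun ν hν => mul_le_mul_of_nonneg_right ?_ (eval_nonneg n ν h0 h1)
  exact_mod_cast Nat.lt_succ_iff.1 (mem_range.1 hν)

theorem eval_sum_range_succ_natCast_mul_lt (n k : ℕ) {x : R} (h0 : 0 < x) (h1 : x < 1) :
    (∑ ν ∈ range (k + 1), (ν : R[X]) * bernsteinPolynomial R n ν).eval x <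
      (k + 1 - x) * (∑ ν ∈ range (k + 1), bernsteinPolynomial R n ν).eval x := by
  have hA := eval_sum_range_pos n k.succ_pos h0 h1
  have hF := eval_sum_range_succ_natCast_mul_le n k h0.le h1.le
  nlinarith

end OrderedRing

end bernsteinPolynomial

theorem hasDerivAt_H1 (n M : ℕ) {τ : ℝ}
    (hA : (∑ ν ∈ range M, bernsteinPolynomial ℝ n ν).eval τ ≠ 0) :
    HasDerivAt (H1 (n + 1) M)
      (((derivative (∑ ν ∈ range M, (ν : ℝ[X]) * bernsteinPolynomial ℝ n ν)).eval τ *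
          (∑ ν ∈ range M, bernsteinPolynomial ℝ n ν).eval τ -
        (∑ ν ∈ range M, (ν : ℝ[X]) * bernsteinPolynomial ℝ n ν).eval τ *
          (derivative (∑ ν ∈ range M, bernsteinPolynomial ℝ n ν)).eval τ) /
        ((∑ ν ∈ range M, bernsteinPolynomial ℝ n ν).eval τ) ^ 2) τ := by
  have hH : H1 (n + 1) M = fun x =>
      (∑ ν ∈ range M, (ν : ℝ[X]) * bernsteinPolynomial ℝ n ν).eval x /
        (∑ ν ∈ range M, bernsteinPolynomial ℝ n ν).eval x := by
    ext x
    simp only [H1, f1, f2, bernsteinPolynomial, eval_finsetSum, eval_mul, eval_natCast, eval_pow,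
      eval_X, eval_sub, eval_one, mul_assoc, Nat.add_sub_cancel]
  rw [hH]
  exact (Polynomial.hasDerivAt _ τ).div (Polynomial.hasDerivAt _ τ) hA

theorem stmt5 (N M : ℕ) (hM : 2 ≤ M) (hMN : M < N) :
    ∀ τ ∈ Ioo (0:ℝ) 1, deriv (H1 N M) τ < (N:ℝ) - 1 := by
  rintro τ ⟨hτ0, hτ1⟩
  obtain ⟨k, rfl⟩ : ∃ k, M = k + 1 := ⟨M - 1, by omega⟩
  obtain ⟨n, rfl⟩ : ∃ n, N = n + 1 + 1 := ⟨N - 2, by omega⟩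
  have hA := bernsteinPolynomial.eval_sum_range_pos (n + 1) (m := k + 1) (by omega) hτ0 hτ1
  have hF := bernsteinPolynomial.eval_sum_range_succ_natCast_mul_lt (n + 1) k hτ0 hτ1
  have hq := bernsteinPolynomial.eval_pos (show k ≤ n by omega) hτ0 hτ1
  have hW := congrArg (eval τ)
    (bernsteinPolynomial.derivative_mul_sub_mul_derivative_sum_range_succ (R := ℝ) n k)
  simp only [eval_add, eval_sub, eval_mul, eval_pow, eval_natCast, eval_X, eval_one] at hW
  rw [(hasDerivAt_H1 (n + 1) (k + 1) hA.ne').deriv, div_lt_iff₀ (by positivity), hW]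
  push_cast
  nlinarith [mul_pos (mul_pos (by positivity : (0 : ℝ) < n + 1) hq) (sub_pos.2 hF)]
end

section
/- Let N and M be integers with 1 ≤ M < N, and let τ be a real number. Then Σ_{i=M}^{N-1} (i - (N-1)τ) C(N-1,i) τ^i (1-τ)^{N-1-i} = (N-M) C(N-1,M-1) τ^M (1-τ)^{N-M}. -/
/-!
The summand is a discrete derivative: with `g i = i C(n,i) τ^i (1-τ)^(n+1-i)` and `n = N - 1`,
`(i - nτ) C(n,i) τ^i (1-τ)^(n-i) = g i - g (i+1)`, by the absorption identity
`(i+1) C(n,i+1) = (n-i) C(n,i)`. The sum telescopes to `g M - g (n+1) = g M`, and one more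
absorption rewrites `g M` as the right-hand side.
-/

open Finset

variable {R : Type*} [CommRing R]

theorem Nat.cast_choose_succ_mul (n k : ℕ) :
    (n.choose (k + 1) : R) * (k + 1) = n.choose k * (n - k) := by
  by_cases hk : k ≤ n
  · have h := congrArg (Nat.cast : ℕ → R) (Nat.choose_succ_right_eq n k)
    push_cast [Nat.cast_sub hk] at h
    exact h
  · simp [Nat.choose_eq_zero_of_lt (not_le.mp hk), Nat.choose_eq_zero_of_lt (by omega : n < k + 1)]

def binomialMomentPotential (n : ℕ) (τ : R) (i : ℕ) : R :=
  i * n.choose i * τ ^ i * (1 - τ) ^ (n + 1 - i)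

theorem sub_mul_choose_mul_pow_eq_potential_sub {n i : ℕ} (hi : i ≤ n) (τ : R) :
    ((i : R) - n * τ) * n.choose i * τ ^ i * (1 - τ) ^ (n - i) =
      binomialMomentPotential n τ i - binomialMomentPotential n τ (i + 1) := by
  have habs := Nat.cast_choose_succ_mul (R := R) n i
  rw [binomialMomentPotential, binomialMomentPotential, show n + 1 - i = n - i + 1 by omega,
    show n + 1 - (i + 1) = n - i by omega]
  push_cast
  linear_combination (τ ^ (i + 1) * (1 - τ) ^ (n - i)) * habs

theorem sum_Icc_sub_mul_choose_mul_pow {m n : ℕ} (hmn : m < n) (τ : R) :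
    ∑ i ∈ Icc (m + 1) n, ((i : R) - n * τ) * n.choose i * τ ^ i * (1 - τ) ^ (n - i) =
      (n - m) * n.choose m * τ ^ (m + 1) * (1 - τ) ^ (n - m) := by
  set g := binomialMomentPotential n τ
  have htop : g (n + 1) = 0 := by simp [g, binomialMomentPotential]
  calc ∑ i ∈ Icc (m + 1) n, ((i : R) - n * τ) * n.choose i * τ ^ i * (1 - τ) ^ (n - i)
      = -∑ i ∈ Icc (m + 1) n, (g (i + 1) - g i) := by
        rw [← sum_neg_distrib]
        refine sum_congr rfl fun i hi => ?_
        rw [sub_mul_choose_mul_pow_eq_potential_sub (mem_Icc.mp hi).2, neg_sub]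
    _ = g (m + 1) := by rw [sum_Icc_sub hmn, htop, zero_sub, neg_neg]
    _ = (n - m) * n.choose m * τ ^ (m + 1) * (1 - τ) ^ (n - m) := by
        simp only [g, binomialMomentPotential, show n + 1 - (m + 1) = n - m by omega]
        push_cast
        linear_combination (τ ^ (m + 1) * (1 - τ) ^ (n - m)) * Nat.cast_choose_succ_mul (R := R) n m

theorem stmt7 (N M : ℕ) (hM : 1 ≤ M) (hMN : M < N) (τ : ℝ) :
    ∑ i ∈ Icc M (N-1), ((i:ℝ) - ((N:ℝ)-1)*τ) * ((N-1).choose i : ℝ) * τ^i * (1-τ)^(N-1-i)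
      = ((N:ℝ)-(M:ℝ)) * ((N-1).choose (M-1) : ℝ) * τ^M * (1-τ)^(N-M) := by
  obtain ⟨m, rfl⟩ : ∃ m, M = m + 1 := ⟨M - 1, by omega⟩
  obtain ⟨n, rfl⟩ : ∃ n, N = n + 1 := ⟨N - 1, by omega⟩
  simp only [Nat.add_sub_cancel, Nat.add_sub_add_right, Nat.cast_add, Nat.cast_one,
    add_sub_cancel_right, add_sub_add_right_eq_sub]
  exact sum_Icc_sub_mul_choose_mul_pow (by omega) τ
end

section
/- Let N and M be integers with 1 ≤ M < N, and let τ ∈ (0,1). Then H_1(τ) = (N-1)τ - (N-M) C(N-1,M-1) R(τ), where R(τ) = τ^M (1-τ)^{N-M} / f_1(τ). -/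
/-! With `n = N - 1` and `aᵢ = C(n,i) τⁱ (1-τ)ⁿ⁻ⁱ` one has `(n τ - i) aᵢ = gᵢ₊₁ - gᵢ` for
`gᵢ = i C(n,i) τⁱ (1-τ)ⁿ⁺¹⁻ⁱ`, so `n τ f₁ - f₂ = Σ_{i<M} (n τ - i) aᵢ` telescopes to
`g_M = (N - M) C(n, M-1) τᴹ (1-τ)ᴺ⁻ᴹ`; dividing by `f₁ > 0` gives the formula. -/

open Finset Set

noncomputable def R (N M : ℕ) (τ : ℝ) : ℝ := τ^M * (1-τ)^(N-M) / f1 N M τ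

section Telescoping

variable {A : Type*} [CommRing A]

theorem Nat.cast_succ_mul_choose_succ (n i : ℕ) :
    ((i : A) + 1) * n.choose (i + 1) = ((n : A) - i) * n.choose i := by
  rcases le_or_gt i n with hin | hni
  · have h := congrArg (Nat.cast : ℕ → A) (Nat.choose_succ_right_eq n i)
    push_cast [hin] at h
    linear_combination h
  · simp [Nat.choose_eq_zero_of_lt hni, Nat.choose_eq_zero_of_lt (hni.trans (Nat.lt_succ_self i))]

theorem binomial_term_telescope (n i : ℕ) (x : A) :
    ((i : A) + 1) * n.choose (i + 1) * x ^ (i + 1) * (1 - x) ^ (n + 1 - (i + 1))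
      - i * n.choose i * x ^ i * (1 - x) ^ (n + 1 - i)
      = (n * x - i) * (n.choose i * x ^ i * (1 - x) ^ (n - i)) := by
  rcases le_or_gt i n with hin | hni
  · rw [Nat.add_sub_add_right, show n + 1 - i = n - i + 1 by omega, pow_succ,
      Nat.cast_succ_mul_choose_succ]
    ring
  · simp [Nat.choose_eq_zero_of_lt hni, Nat.choose_eq_zero_of_lt (hni.trans (Nat.lt_succ_self i))]

theorem sum_range_sub_mul_binomial_term (n m : ℕ) (x : A) :
    ∑ i ∈ range m, (n * x - i) * (n.choose i * x ^ i * (1 - x) ^ (n - i))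
      = m * n.choose m * x ^ m * (1 - x) ^ (n + 1 - m) := by
  have h := sum_range_sub (fun i ↦ (i : A) * n.choose i * x ^ i * (1 - x) ^ (n + 1 - i)) m
  simpa only [Nat.cast_add, Nat.cast_one, binomial_term_telescope, Nat.cast_zero, zero_mul,
    sub_zero] using h

end Telescoping

theorem f1_pos {N M : ℕ} (hM : 1 ≤ M) {τ : ℝ} (hτ : τ ∈ Ioo (0 : ℝ) 1) : 0 < f1 N M τ := by
  obtain ⟨hτ0, hτ1⟩ := hτ
  have h1τ : 0 < 1 - τ := by linarith
  refine sum_pos' (fun i _ ↦ by positivity) ⟨0, mem_range.mpr hM, ?_⟩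
  simp [pow_pos h1τ]

theorem mul_f1_sub_f2 (N M : ℕ) (τ : ℝ) :
    ((N - 1 : ℕ) : ℝ) * τ * f1 N M τ - f2 N M τ
      = M * (N - 1).choose M * τ ^ M * (1 - τ) ^ (N - 1 + 1 - M) := by
  rw [← sum_range_sub_mul_binomial_term, f1, f2, mul_sum, ← sum_sub_distrib]
  exact sum_congr rfl fun i _ ↦ by ring

theorem stmt8 (N M : ℕ) (hM : 1 ≤ M) (hMN : M < N) :
    ∀ τ ∈ Ioo (0:ℝ) 1,
      H1 N M τ = ((N:ℝ)-1)*τ - ((N:ℝ)-(M:ℝ)) * ((N-1).choose (M-1) : ℝ) * R N M τ := by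
  intro τ hτ
  obtain ⟨m, rfl⟩ : ∃ m, M = m + 1 := ⟨M - 1, by omega⟩
  have hf1 := (f1_pos (N := N) hM hτ).ne'
  have key := mul_f1_sub_f2 N (m + 1) τ
  rw [Nat.cast_succ, Nat.cast_succ_mul_choose_succ,
    show N - 1 + 1 - (m + 1) = N - (m + 1) by omega, Nat.cast_sub (by omega : 1 ≤ N)] at key
  rw [H1, R, Nat.add_sub_cancel]
  field_simp
  push_cast at key ⊢
  linear_combination -key
end

section
/- Let N and M be integers with 2 ≤ M < N, and define Q(x) = x^{M-1} / (Σ_{i=0}^{M-1} C(N-1,i) x^i) for x > 0. Then Q'(x) > 0 for every x > 0. -/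
open Finset Set

noncomputable def Q (N M : ℕ) (x : ℝ) : ℝ :=
  x^(M-1) / ∑ i ∈ range M, ((N-1).choose i : ℝ) * x^i

/-! Write `S(x) = ∑_{i<m} cᵢ xⁱ` with `cᵢ ≥ 0`, `c₀ > 0` and `m ≤ n + 1`. By the quotient rule the
numerator of `(xⁿ / S)'` is `x^(n-1) (n S(x) - x S'(x)) = x^(n-1) ∑ cᵢ (n - i) xⁱ`; every term is
nonnegative since `i ≤ n`, and the constant term `n c₀` is positive once `n ≥ 1`. -/

section PowDivSum

variable (c : ℕ → ℝ) (m : ℕ)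

theorem hasDerivAt_sum_mul_pow (x : ℝ) :
    HasDerivAt (fun y => ∑ i ∈ range m, c i * y ^ i)
      (∑ i ∈ range m, c i * (i * x ^ (i - 1))) x :=
  HasDerivAt.fun_sum fun i _ => (hasDerivAt_pow i x).const_mul (c i)

theorem mul_sum_mul_pow_sub_mul_deriv (n : ℕ) (x : ℝ) :
    n * ∑ i ∈ range m, c i * x ^ i - x * ∑ i ∈ range m, c i * (i * x ^ (i - 1))
      = ∑ i ∈ range m, c i * ((n : ℝ) - i) * x ^ i := by
  rw [mul_sum, mul_sum, ← sum_sub_distrib]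
  refine sum_congr rfl fun i _ => ?_
  rcases i with _ | i
  · simp [mul_comm]
  · simp only [Nat.add_sub_cancel, pow_succ]
    ring

variable {c m}

theorem sum_mul_sub_mul_pow_pos (hc : ∀ i, 0 ≤ c i) (hc0 : 0 < c 0) {n : ℕ} (hn : 0 < n)
    (hm0 : 0 < m) (hmn : m ≤ n + 1) {x : ℝ} (hx : 0 < x) :
    0 < ∑ i ∈ range m, c i * ((n : ℝ) - i) * x ^ i := by
  refine sum_pos' (fun i hi => ?_)
    ⟨0, mem_range.2 hm0, by simpa using mul_pos hc0 (Nat.cast_pos.2 hn)⟩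
  have hin : (i : ℝ) ≤ n := by exact_mod_cast Nat.le_of_lt_succ ((mem_range.1 hi).trans_le hmn)
  have hci := hc i
  have hni : 0 ≤ (n : ℝ) - i := sub_nonneg.2 hin
  positivity

theorem deriv_pow_div_sum_mul_pow_pos (hc : ∀ i, 0 ≤ c i) (hc0 : 0 < c 0) {n : ℕ} (hn : 0 < n)
    (hm0 : 0 < m) (hmn : m ≤ n + 1) {x : ℝ} (hx : 0 < x) :
    0 < deriv (fun y => y ^ n / ∑ i ∈ range m, c i * y ^ i) x := by
  have hS : 0 < ∑ i ∈ range m, c i * x ^ i :=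
    sum_pos' (fun i _ => mul_nonneg (hc i) (pow_nonneg hx.le i))
      ⟨0, mem_range.2 hm0, by simpa using hc0⟩
  have hxn : x ^ n = x ^ (n - 1) * x := by rw [← pow_succ, Nat.sub_add_cancel hn]
  rw [((hasDerivAt_pow n x).fun_div (hasDerivAt_sum_mul_pow c m x) hS.ne').deriv, hxn,
    show ∀ a b : ℝ, (n : ℝ) * x ^ (n - 1) * a - x ^ (n - 1) * x * b
      = x ^ (n - 1) * (n * a - x * b) from fun a b => by ring,
    mul_sum_mul_pow_sub_mul_deriv]
  have hnum := sum_mul_sub_mul_pow_pos hc hc0 hn hm0 hmn hx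
  positivity

end PowDivSum

theorem stmt9_general (N M : ℕ) (hM : 2 ≤ M) :
    ∀ x : ℝ, 0 < x → 0 < deriv (Q N M) x := by
  intro x hx
  exact deriv_pow_div_sum_mul_pow_pos (fun i => Nat.cast_nonneg _) (by simp) (by omega) (by omega)
    (by omega) hx

theorem stmt9 (N M : ℕ) (hM : 2 ≤ M) (hMN : M < N) :
    ∀ x : ℝ, 0 < x → 0 < deriv (Q N M) x :=
  stmt9_general N M hM
end

section
/- Let N and M be integers with 2 ≤ M < N, and define R(τ) = τ^M (1-τ)^{N-M} / f_1(τ) for τ ∈ (0,1). Then R'(τ) > 0 for every τ ∈ (0,1). -/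
open Finset Set

/-!
Factoring `τ^(M-1) (1-τ)^(N-M)` out of `f1` and reflecting the summation index gives
`R τ = τ / P u` with `u = τ⁻¹ - 1` and `P u = ∑_{j<M} C(N-1, M-1-j) u^j`, a polynomial with
nonnegative coefficients and positive constant term. Since `du/dτ = -τ⁻²`, the quotient rule gives
`R' τ = (P u + P' u / τ) / (P u)^2 > 0`.
-/

open Polynomial Filter Topology

namespace Polynomial

section OrderedSemiring

variable {S : Type*} [CommSemiring S] [PartialOrder S] [IsOrderedRing S]

theorem eval_nonneg_of_coeff_nonneg {p : S[X]} (hp : ∀ n, 0 ≤ p.coeff n) {x : S} (hx : 0 ≤ x) :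
    0 ≤ p.eval x := by
  rw [eval_eq_sum_range]
  exact sum_nonneg fun n _ => mul_nonneg (hp n) (pow_nonneg hx n)

theorem coeff_derivative_nonneg {p : S[X]} (hp : ∀ n, 0 ≤ p.coeff n) (n : ℕ) :
    0 ≤ p.derivative.coeff n := by
  rw [coeff_derivative]
  exact mul_nonneg (hp _) (add_nonneg n.cast_nonneg zero_le_one)

end OrderedSemiring

theorem eval_pos_of_coeff_nonneg {S : Type*} [CommSemiring S] [PartialOrder S]
    [IsStrictOrderedRing S] {p : S[X]} (hp : ∀ n, 0 ≤ p.coeff n)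
    (h0 : 0 < p.coeff 0) {x : S} (hx : 0 ≤ x) : 0 < p.eval x := by
  rw [eval_eq_sum_range]
  refine sum_pos' (fun n _ => mul_nonneg (hp n) (pow_nonneg hx n)) ⟨0, by simp, ?_⟩
  simpa using h0

theorem hasDerivAt_div_eval_inv_sub_one (p : ℝ[X]) {τ : ℝ} (hτ : τ ≠ 0)
    (hp : p.eval (τ⁻¹ - 1) ≠ 0) :
    HasDerivAt (fun t => t / p.eval (t⁻¹ - 1))
      ((p.eval (τ⁻¹ - 1) + p.derivative.eval (τ⁻¹ - 1) / τ) / p.eval (τ⁻¹ - 1) ^ 2) τ := by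
  have hu : HasDerivAt (fun t : ℝ => t⁻¹ - 1) (-(τ ^ 2)⁻¹) τ := (hasDerivAt_inv hτ).sub_const 1
  have hP : HasDerivAt (fun t => p.eval (t⁻¹ - 1)) (p.derivative.eval (τ⁻¹ - 1) * -(τ ^ 2)⁻¹) τ :=
    (p.hasDerivAt _).comp τ hu
  refine ((hasDerivAt_id' τ).div hP hp).congr_deriv ?_
  field_simp
  ring

end Polynomial

noncomputable def f1Poly (N M : ℕ) : ℝ[X] :=
  ∑ j ∈ range M, C ((N - 1).choose (M - 1 - j) : ℝ) * X ^ j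

theorem f1Poly_coeff_nonneg (N M n : ℕ) : 0 ≤ (f1Poly N M).coeff n := by
  simp only [f1Poly, finsetSum_coeff, coeff_C_mul_X_pow]
  exact sum_nonneg fun j _ => by split_ifs <;> positivity

theorem f1Poly_coeff_zero_pos {N M : ℕ} (hM : 1 ≤ M) (hMN : M ≤ N) :
    0 < (f1Poly N M).coeff 0 := by
  rw [f1Poly, finsetSum_coeff, sum_eq_single 0 (fun j _ hj => by simp [hj.symm]) (by simp; omega)]
  simpa using Nat.choose_pos (by omega)

theorem f1_eq_mul_eval_f1Poly {N M : ℕ} (hMN : M ≤ N) {τ : ℝ} (hτ : τ ≠ 0) :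
    f1 N M τ = τ ^ (M - 1) * (1 - τ) ^ (N - M) * (f1Poly N M).eval (τ⁻¹ - 1) := by
  rw [f1, f1Poly, eval_finsetSum, mul_sum, ← sum_range_reflect]
  refine sum_congr rfl fun j hj => ?_
  have hjM := mem_range.mp hj
  have hN : N - 1 - (M - 1 - j) = N - M + j := by omega
  have hτj : τ ^ (M - 1) * τ⁻¹ ^ j = τ ^ (M - 1 - j) := by
    rw [inv_pow, ← pow_sub₀ τ hτ (by omega : j ≤ M - 1)]
  have hu : τ⁻¹ - 1 = τ⁻¹ * (1 - τ) := by field_simp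
  simp only [eval_mul, eval_C, eval_pow, eval_X, hu, mul_pow, hN, pow_add, ← hτj]
  ring

theorem R_eq_div_eval_f1Poly {N M : ℕ} (hM : 1 ≤ M) (hMN : M ≤ N) {τ : ℝ}
    (hτ : τ ∈ Ioo (0 : ℝ) 1) :
    R N M τ = τ / (f1Poly N M).eval (τ⁻¹ - 1) := by
  have hτ0 : τ ≠ 0 := hτ.1.ne'
  have hτ1 : (1 - τ) ^ (N - M) ≠ 0 := pow_ne_zero _ (sub_ne_zero.mpr hτ.2.ne')
  rw [R, f1_eq_mul_eval_f1Poly hMN hτ0, ← pow_sub_one_mul (by omega : M ≠ 0)]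
  field_simp

theorem stmt10 (N M : ℕ) (hM : 2 ≤ M) (hMN : M < N) :
    ∀ τ ∈ Ioo (0:ℝ) 1, 0 < deriv (R N M) τ := by
  intro τ hτ
  have hu : 0 ≤ τ⁻¹ - 1 := sub_nonneg.mpr ((one_le_inv₀ hτ.1).mpr hτ.2.le)
  have hP : 0 < (f1Poly N M).eval (τ⁻¹ - 1) :=
    eval_pos_of_coeff_nonneg (f1Poly_coeff_nonneg N M) (f1Poly_coeff_zero_pos (by omega) hMN.le) hu
  have hP' : 0 ≤ (f1Poly N M).derivative.eval (τ⁻¹ - 1) :=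
    eval_nonneg_of_coeff_nonneg (coeff_derivative_nonneg (f1Poly_coeff_nonneg N M)) hu
  have hR : R N M =ᶠ[𝓝 τ] fun t => t / (f1Poly N M).eval (t⁻¹ - 1) := by
    filter_upwards [isOpen_Ioo.mem_nhds hτ] with t ht
    exact R_eq_div_eval_f1Poly (by omega) hMN.le ht
  rw [hR.deriv_eq, ((f1Poly N M).hasDerivAt_div_eval_inv_sub_one hτ.1.ne' hP.ne').deriv]
  have hτ0 : 0 < τ := hτ.1
  positivity
end

section
/- Let N ≥ 2 and D ≥ 1 be integers. For every τ ∈ (0,1), the derivative of H_2 satisfies H_2'(τ) > N-1. -/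
open Set

noncomputable def H2 (N D : ℕ) (τ : ℝ) : ℝ :=
  τ * ((N:ℝ) + (D:ℝ) - 1 - (D:ℝ) / (1 - (1-τ)^D))

/-! With `u = 1 - τ` and `s = 1 - u^D`, differentiating gives
`H₂'(τ) - (N - 1) = D (τ D u^(D-1) - s u^D) / s²`, because `s² - s = -s u^D`.
The numerator is positive: Bernoulli's inequality gives `s ≤ D τ`, and `u^D < u^(D-1)`. -/

lemma one_sub_pow_mul_pow_lt {u : ℝ} (hu0 : 0 < u) (hu1 : u < 1) {n : ℕ} (hn : n ≠ 0) :
    (1 - u ^ n) * u ^ n < (1 - u) * n * u ^ (n - 1) := by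
  have bernoulli : 1 - u ^ n ≤ (1 - u) * n := by
    nlinarith [one_add_mul_sub_le_pow (a := u) (by linarith) n]
  have hn0 : (0 : ℝ) < n := by exact_mod_cast Nat.pos_of_ne_zero hn
  calc (1 - u ^ n) * u ^ n ≤ (1 - u) * n * u ^ n := by gcongr
    _ < (1 - u) * n * u ^ (n - 1) := by
      refine mul_lt_mul_of_pos_left ?_ (mul_pos (by linarith) hn0)
      exact pow_lt_pow_right_of_lt_one₀ hu0 hu1 (Nat.sub_lt (Nat.pos_of_ne_zero hn) one_pos)

lemma hasDerivAt_H2 (N D : ℕ) {τ : ℝ} (hs : 1 - (1 - τ) ^ D ≠ 0) :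
    HasDerivAt (H2 N D)
      ((N : ℝ) - 1 + D * (τ * D * (1 - τ) ^ (D - 1) - (1 - (1 - τ) ^ D) * (1 - τ) ^ D)
        / (1 - (1 - τ) ^ D) ^ 2) τ := by
  have hden : HasDerivAt (fun t : ℝ => 1 - (1 - t) ^ D) (D * (1 - τ) ^ (D - 1)) τ :=
    ((((hasDerivAt_id' τ).const_sub 1).fun_pow D).const_sub 1).congr_deriv (by ring)
  refine ((hasDerivAt_id' τ).fun_mul ((hasDerivAt_const τ ((N : ℝ) + D - 1)).fun_sub
    ((hasDerivAt_const τ (D : ℝ)).fun_div hden hs))).congr_deriv ?_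
  obtain ⟨k, rfl⟩ : ∃ k, D = k + 1 := Nat.exists_eq_succ_of_ne_zero (by rintro rfl; simp at hs)
  field_simp
  ring

theorem stmt11_general (N D : ℕ) (hD : 1 ≤ D) :
    ∀ τ ∈ Ioo (0:ℝ) 1, (N:ℝ) - 1 < deriv (H2 N D) τ := by
  rintro τ ⟨hτ0, hτ1⟩
  have hu0 : 0 < 1 - τ := by linarith
  have hu1 : 1 - τ < 1 := by linarith
  have hD0 : D ≠ 0 := by omega
  have hs : 0 < 1 - (1 - τ) ^ D := sub_pos.mpr (pow_lt_one₀ hu0.le hu1 hD0)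
  have key := one_sub_pow_mul_pow_lt hu0 hu1 hD0
  rw [sub_sub_cancel] at key
  rw [(hasDerivAt_H2 N D hs.ne').deriv]
  refine lt_add_of_pos_right _ (div_pos (mul_pos (by exact_mod_cast hD) ?_) (by positivity))
  linarith

theorem stmt11 (N D : ℕ) (hN : 2 ≤ N) (hD : 1 ≤ D) :
    ∀ τ ∈ Ioo (0:ℝ) 1, (N:ℝ) - 1 < deriv (H2 N D) τ :=
  stmt11_general N D hD
end

section
/- Let N ≥ 2 and D ≥ 1 be integers and let M = 1. Then the unique maximizer of P_D on [0,1] is τ = 1 - ((N-1)/(N-1+D))^{1/D}. -/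
/-! With `x = 1 - τ` and `a = N - 1`, the delivery probability for `M = 1` is `x ^ a - x ^ (a + D)`,
whose derivative `x ^ (a - 1) * (a - (a + D) * x ^ D)` changes sign exactly once on `[0, 1]`, at
`x ^ D = a / (a + D)`. So that point is the strict maximizer, and the optimal `τ` is `1 - x`. -/

open Finset Set

lemma P_one (N D : ℕ) (τ : ℝ) : P N 1 D τ = (1 - τ) ^ (N - 1) - (1 - τ) ^ (N - 1 + D) := by
  simp only [P, range_one, sum_singleton, Nat.choose_zero_right, Nat.cast_one, pow_zero,
    Nat.sub_zero, pow_add]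
  ring

section PowSubPow

variable {a D : ℕ}

lemma deriv_pow_sub_pow (ha : 1 ≤ a) (x : ℝ) :
    deriv (fun x : ℝ => x ^ a - x ^ (a + D)) x = x ^ (a - 1) * (a - (a + D) * x ^ D) := by
  rw [((hasDerivAt_pow a x).fun_sub (hasDerivAt_pow (a + D) x)).deriv,
    show a + D - 1 = a - 1 + D by omega, pow_add]
  push_cast
  ring

variable {c : ℝ}

lemma strictMonoOn_pow_sub_pow (ha : 1 ≤ a) (hD : D ≠ 0) (hcD : c ^ D = a / (a + D)) :
    StrictMonoOn (fun x : ℝ => x ^ a - x ^ (a + D)) (Icc 0 c) := by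
  refine strictMonoOn_of_deriv_pos (convex_Icc 0 c) (by fun_prop) fun x hx => ?_
  rw [interior_Icc] at hx
  have hxD : (a + D) * x ^ D < a := by
    have := pow_lt_pow_left₀ hx.2 hx.1.le hD
    rw [hcD, lt_div_iff₀ (by positivity)] at this
    linarith
  rw [deriv_pow_sub_pow ha]
  exact mul_pos (pow_pos hx.1 _) (by linarith)

lemma strictAntiOn_pow_sub_pow (ha : 1 ≤ a) (hD : D ≠ 0) (hc : 0 ≤ c)
    (hcD : c ^ D = a / (a + D)) :
    StrictAntiOn (fun x : ℝ => x ^ a - x ^ (a + D)) (Icc c 1) := by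
  refine strictAntiOn_of_deriv_neg (convex_Icc c 1) (by fun_prop) fun x hx => ?_
  rw [interior_Icc] at hx
  have hx0 : 0 < x := hc.trans_lt hx.1
  have hxD : a < (a + D) * x ^ D := by
    have := pow_lt_pow_left₀ hx.1 hc hD
    rw [hcD, div_lt_iff₀ (by positivity)] at this
    linarith
  rw [deriv_pow_sub_pow ha]
  exact mul_neg_of_pos_of_neg (pow_pos hx0 _) (by linarith)

lemma pow_sub_pow_lt_of_ne (ha : 1 ≤ a) (hD : D ≠ 0) (hc : 0 ≤ c) (hc1 : c ≤ 1)
    (hcD : c ^ D = a / (a + D)) {x : ℝ} (hx : x ∈ Icc (0 : ℝ) 1) (hxc : x ≠ c) :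
    x ^ a - x ^ (a + D) < c ^ a - c ^ (a + D) := by
  rcases hxc.lt_or_gt with h | h
  · exact strictMonoOn_pow_sub_pow ha hD hcD ⟨hx.1, h.le⟩ ⟨hc, le_rfl⟩ h
  · exact strictAntiOn_pow_sub_pow ha hD hc hcD ⟨le_rfl, hc1⟩ ⟨h.le, hx.2⟩ h

end PowSubPow

theorem stmt14 (N D : ℕ) (hN : 2 ≤ N) (hD : 1 ≤ D) :
    (1 - (((N:ℝ)-1)/((N:ℝ)-1+(D:ℝ))) ^ ((1:ℝ)/(D:ℝ))) ∈ Icc (0:ℝ) 1 ∧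
    ∀ τ ∈ Icc (0:ℝ) 1,
      τ ≠ 1 - (((N:ℝ)-1)/((N:ℝ)-1+(D:ℝ))) ^ ((1:ℝ)/(D:ℝ)) →
      P N 1 D τ < P N 1 D (1 - (((N:ℝ)-1)/((N:ℝ)-1+(D:ℝ))) ^ ((1:ℝ)/(D:ℝ))) := by
  have hcast : ((N - 1 : ℕ) : ℝ) = (N : ℝ) - 1 := by
    rw [Nat.cast_sub (by omega), Nat.cast_one]
  have hr0 : 0 ≤ ((N : ℝ) - 1) / ((N : ℝ) - 1 + D) := by
    rw [← hcast]; positivity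
  have hr1 : ((N : ℝ) - 1) / ((N : ℝ) - 1 + D) ≤ 1 := by
    rw [← hcast]; exact div_le_one_of_le₀ (by simp) (by positivity)
  have hcD : ((((N : ℝ) - 1) / ((N : ℝ) - 1 + D)) ^ ((1 : ℝ) / D)) ^ D =
      ((N - 1 : ℕ) : ℝ) / ((N - 1 : ℕ) + D) := by
    rw [hcast, one_div, Real.rpow_inv_natCast_pow hr0 (by omega)]
  set c := (((N : ℝ) - 1) / ((N : ℝ) - 1 + D)) ^ ((1 : ℝ) / D)
  have hc0 : 0 ≤ c := Real.rpow_nonneg hr0 _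
  have hc1 : c ≤ 1 := Real.rpow_le_one hr0 hr1 (by positivity)
  refine ⟨⟨by linarith, by linarith⟩, fun τ hτ hne => ?_⟩
  rw [P_one, P_one, sub_sub_cancel]
  exact pow_sub_pow_lt_of_ne (by omega) (by omega) hc0 hc1 hcD
    ⟨by linarith [hτ.2], by linarith [hτ.1]⟩ fun h => hne (by linarith)
end

section
/- Let N, M, D be integers with 2 ≤ M < N and D ≥ 1, let τ* ∈ (0,1) be the unique solution of H_1(τ) = H_2(τ) in (0,1), and define g(x) = x(H_1(x)+1)/(H_2(x)+1). For any initial value x₀ ∈ (1-((N-1)/(N-1+D))^{1/D}, 1), the sequence defined by x_{n+1} = g(x_n) converges to τ*. -/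
open Finset Set

noncomputable def g (N M D : ℕ) (x : ℝ) : ℝ :=
  x * (H1 N M x + 1) / (H2 N D x + 1)

/-!
On `(0,1)` the map is `g x = (A x + 1) / (N + B (1 - x))`, where `A x` is the mean index under
the weights `C(N-1,i) x^i (1-x)^(M-1-i)`, `i < M`, and `B q` the mean index under the weights
`q^j`, `j < D`. Raising `x` (or `q`) multiplies these weights by `c r^i` with `r ≥ 1`, which by
the weighted Chebyshev inequality raises the mean: `A` increases and `B (1 - x)` decreases, so
`g` is monotone. The sign of `g x - x` is that of `E x = A x + 1 - x (N + B (1 - x))`, which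
agrees with `H1 - H2` on `(0,1)` but is continuous on `[0,1]`, with `E 0 = 1` and
`E 1 = M - N < 0`. As `τ*` is its only zero, `g x > x` below `τ*` and `g x < x` above, and a
monotone continuous map with this sign pattern moves every orbit monotonically to `τ*`.
-/

open Filter Topology OrderDual

theorem MonovaryOn.weighted_sum_mul_sum_le_sum_mul_sum {ι : Type*} {s : Finset ι}
    {w a b : ι → ℝ} (hab : MonovaryOn a b s) (hw : ∀ i ∈ s, 0 ≤ w i) :
    (∑ i ∈ s, w i * a i) * (∑ i ∈ s, w i * b i) ≤
      (∑ i ∈ s, w i) * ∑ i ∈ s, w i * a i * b i := by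
  have hdouble : 0 ≤ ∑ i ∈ s, ∑ j ∈ s, w i * w j * ((a j - a i) * (b j - b i)) :=
    sum_nonneg fun i hi => sum_nonneg fun j hj =>
      mul_nonneg (mul_nonneg (hw i hi) (hw j hj)) (hab.sub_mul_sub_nonneg hi hj)
  have hexpand : ∑ i ∈ s, ∑ j ∈ s, w i * w j * ((a j - a i) * (b j - b i)) =
      (∑ i ∈ s, ∑ j ∈ s, w i * (w j * a j * b j))
        + (∑ i ∈ s, ∑ j ∈ s, w j * (w i * a i * b i))
        - (∑ i ∈ s, ∑ j ∈ s, w i * a i * (w j * b j))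
        - ∑ i ∈ s, ∑ j ∈ s, w j * a j * (w i * b i) := by
    simp only [← sum_add_distrib, ← sum_sub_distrib]
    exact sum_congr rfl fun i _ => sum_congr rfl fun j _ => by ring
  rw [sum_comm (f := fun i j => w j * (w i * a i * b i)),
    sum_comm (f := fun i j => w j * a j * (w i * b i)), ← sum_mul_sum, ← sum_mul_sum] at hexpand
  linarith

noncomputable def indexMean (n : ℕ) (w : ℕ → ℝ) : ℝ :=
  (∑ i ∈ range n, (i : ℝ) * w i) / ∑ i ∈ range n, w i

theorem indexMean_const_mul {n : ℕ} {c : ℝ} (hc : c ≠ 0) (w : ℕ → ℝ) :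
    indexMean n (fun i => c * w i) = indexMean n w := by
  simp only [indexMean, mul_left_comm _ c, ← mul_sum]
  exact mul_div_mul_left _ _ hc

theorem indexMean_nonneg {n : ℕ} {w : ℕ → ℝ} (hw : ∀ i ∈ range n, 0 ≤ w i) :
    0 ≤ indexMean n w :=
  div_nonneg (sum_nonneg fun i hi => mul_nonneg i.cast_nonneg (hw i hi)) (sum_nonneg hw)

theorem indexMean_eq_single {n k : ℕ} {w : ℕ → ℝ} (hk : k < n)
    (hw : ∀ i ∈ range n, i ≠ k → w i = 0) (hwk : w k ≠ 0) : indexMean n w = k := by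
  have hmem : k ∈ range n := mem_range.2 hk
  rw [indexMean, sum_eq_single_of_mem k hmem fun i hi hik => by rw [hw i hi hik, mul_zero],
    sum_eq_single_of_mem k hmem hw, mul_div_cancel_right₀ _ hwk]

theorem indexMean_le_of_tilt {n : ℕ} {w w' : ℕ → ℝ} {c r : ℝ}
    (hw : ∀ i ∈ range n, 0 ≤ w i) (hc : 0 < c) (hr : 1 ≤ r)
    (hw' : ∀ i ∈ range n, w' i = c * (r ^ i * w i)) :
    indexMean n w ≤ indexMean n w' := by
  have htilt : ∀ i ∈ range n, 0 ≤ r ^ i * w i := fun i hi =>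
    mul_nonneg (pow_nonneg (zero_le_one.trans hr) i) (hw i hi)
  have hcongr : indexMean n w' = indexMean n (fun i => c * (r ^ i * w i)) := by
    unfold indexMean
    rw [sum_congr rfl hw', sum_congr rfl fun i hi => by rw [hw' i hi]]
  rw [hcongr, indexMean_const_mul hc.ne']
  obtain hzero | hpos := (sum_nonneg hw).eq_or_lt
  · rw [indexMean, ← hzero, div_zero]
    exact indexMean_nonneg htilt
  have hle : ∑ i ∈ range n, w i ≤ ∑ i ∈ range n, r ^ i * w i :=
    sum_le_sum fun i hi => le_mul_of_one_le_left (hw i hi) (one_le_pow₀ hr)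
  have hcheb := ((Nat.mono_cast (α := ℝ)).monovary (pow_right_mono₀ hr)).monovaryOn
    (↑(range n) : Set ℕ) |>.weighted_sum_mul_sum_le_sum_mul_sum hw
  rw [indexMean, indexMean, div_le_div_iff₀ hpos (hpos.trans_le hle)]
  calc (∑ i ∈ range n, (i : ℝ) * w i) * ∑ i ∈ range n, r ^ i * w i
      = (∑ i ∈ range n, w i * i) * ∑ i ∈ range n, w i * r ^ i := by
        simp only [mul_comm (w _)]
    _ ≤ (∑ i ∈ range n, w i) * ∑ i ∈ range n, w i * i * r ^ i := hcheb
    _ = (∑ i ∈ range n, (i : ℝ) * (r ^ i * w i)) * ∑ i ∈ range n, w i := by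
        rw [mul_comm]; congr 1; exact sum_congr rfl fun i _ => by ring

theorem continuousOn_indexMean {n : ℕ} {w : ℝ → ℕ → ℝ} {s : Set ℝ}
    (hw : ∀ i, Continuous fun x => w x i) (hne : ∀ x ∈ s, ∑ i ∈ range n, w x i ≠ 0) :
    ContinuousOn (fun x => indexMean n (w x)) s := by
  unfold indexMean
  exact (continuous_finsetSum _ fun i _ => continuous_const.mul (hw i)).continuousOn.div
    (continuous_finsetSum _ fun i _ => hw i).continuousOn hne

section Iteration

variable {α : Type*} [ConditionallyCompleteLinearOrder α] [TopologicalSpace α] [OrderTopology α]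
  {f : α → α} {τ : α} {x : ℕ → α}

theorem tendsto_fixedPt_of_le (hmono : MonotoneOn f (Icc (x 0) τ))
    (hcont : ContinuousOn f (Icc (x 0) τ)) (hfix : f τ = τ)
    (hlt : ∀ z ∈ Ico (x 0) τ, z < f z) (hx0 : x 0 ≤ τ) (hrec : ∀ n, x (n + 1) = f (x n)) :
    Tendsto x atTop (𝓝 τ) := by
  have hstep : ∀ z ∈ Icc (x 0) τ, z ≤ f z ∧ f z ≤ τ := fun z hz =>
    ⟨hz.2.eq_or_lt.elim (fun h => h ▸ hfix.ge) fun h => (hlt z ⟨hz.1, h⟩).le,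
      hfix ▸ hmono hz ⟨hx0, le_rfl⟩ hz.2⟩
  have hmem : ∀ n, x n ∈ Icc (x 0) τ := by
    intro n
    induction n with
    | zero => exact ⟨le_rfl, hx0⟩
    | succ n ih => rw [hrec]; exact ⟨ih.1.trans (hstep _ ih).1, (hstep _ ih).2⟩
  have hx_mono : Monotone x := monotone_nat_of_le_succ fun n => hrec n ▸ (hstep _ (hmem n)).1
  have hlim := tendsto_atTop_ciSup hx_mono ⟨τ, by rintro _ ⟨n, rfl⟩; exact (hmem n).2⟩
  set ℓ := ⨆ n, x n
  have hℓ : ℓ ∈ Icc (x 0) τ := isClosed_Icc.mem_of_tendsto hlim (Eventually.of_forall hmem)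
  have hfixℓ : f ℓ = ℓ := by
    refine tendsto_nhds_unique ?_ ((tendsto_add_atTop_iff_nat 1).2 hlim)
    simp only [hrec]
    exact (hcont ℓ hℓ).tendsto.comp
      (tendsto_nhdsWithin_iff.2 ⟨hlim, Eventually.of_forall hmem⟩)
  obtain hℓτ | hℓτ := hℓ.2.eq_or_lt
  · exact hℓτ ▸ hlim
  · exact absurd hfixℓ (hlt ℓ ⟨hℓ.1, hℓτ⟩).ne'

theorem tendsto_fixedPt_of_monotoneOn {a b : α} (hmono : MonotoneOn f (Ioo a b))
    (hcont : ContinuousOn f (Ioo a b)) (hτ : τ ∈ Ioo a b) (hfix : f τ = τ)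
    (hlt : ∀ z ∈ Ioo a τ, z < f z) (hgt : ∀ z ∈ Ioo τ b, f z < z)
    (hx0 : x 0 ∈ Ioo a b) (hrec : ∀ n, x (n + 1) = f (x n)) : Tendsto x atTop (𝓝 τ) := by
  obtain hle | hge := le_total (x 0) τ
  · have hsub : Icc (x 0) τ ⊆ Ioo a b := Icc_subset_Ioo hx0.1 hτ.2
    exact tendsto_fixedPt_of_le (hmono.mono hsub) (hcont.mono hsub) hfix
      (fun z hz => hlt z ⟨hx0.1.trans_le hz.1, hz.2⟩) hle hrec
  · have hsub : Icc (toDual (x 0)) (toDual τ) ⊆ (Ioo a b : Set α) := fun z hz =>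
      Icc_subset_Ioo hτ.1 hx0.2 ⟨hz.2, hz.1⟩
    exact tendsto_fixedPt_of_le (α := αᵒᵈ) (f := toDual ∘ f ∘ ofDual) (x := toDual ∘ x)
      (hmono.dual.mono hsub) (hcont.mono hsub) hfix
      (fun z hz => hgt (ofDual z) ⟨hz.2, (show ofDual z ≤ x 0 from hz.1).trans_lt hx0.2⟩)
      hge hrec

end Iteration

theorem IsPreconnected.lt_of_forall_ne {X α : Type*} [TopologicalSpace X] [LinearOrder α]
    [TopologicalSpace α] [OrderClosedTopology α] {s : Set X} {f : X → α} {a b : X} {c : α}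
    (hs : IsPreconnected s) (hf : ContinuousOn f s) (hne : ∀ x ∈ s, f x ≠ c) (ha : a ∈ s)
    (hb : b ∈ s) (hca : c < f a) : c < f b := by
  by_contra! hbc
  obtain ⟨x, hx, hfx⟩ := hs.intermediate_value hb ha hf ⟨hbc, hca.le⟩
  exact hne x hx hfx

noncomputable def binomWeight (N K : ℕ) (x : ℝ) (i : ℕ) : ℝ :=
  (N - 1).choose i * x ^ i * (1 - x) ^ (K - 1 - i)

noncomputable def binomMean (N M : ℕ) (x : ℝ) : ℝ := indexMean M (binomWeight N M x)

noncomputable def geomMean (D : ℕ) (q : ℝ) : ℝ := indexMean D (q ^ ·)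

section Binomial

variable {N M : ℕ}

theorem binomWeight_nonneg {K : ℕ} {x : ℝ} (hx : x ∈ Icc (0 : ℝ) 1) (i : ℕ) :
    0 ≤ binomWeight N K x i := by
  have := hx.1; have := sub_nonneg.2 hx.2
  unfold binomWeight; positivity

theorem binomMean_nonneg {x : ℝ} (hx : x ∈ Icc (0 : ℝ) 1) : 0 ≤ binomMean N M x :=
  indexMean_nonneg fun i _ => binomWeight_nonneg hx i

theorem binomWeight_eq_mul {x : ℝ} (hMN : M ≤ N) {i : ℕ} (hi : i ∈ range M) :
    binomWeight N N x i = (1 - x) ^ (N - M) * binomWeight N M x i := by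
  have : N - 1 - i = (N - M) + (M - 1 - i) := by rw [Finset.mem_range] at hi; omega
  rw [binomWeight, binomWeight, this, pow_add]; ring

/-- Off `x = 1`, the common factor `(1 - x) ^ (N - M)` of `f1` and `f2` cancels in `H1`. -/
theorem H1_eq_binomMean (hMN : M ≤ N) {x : ℝ} (hx : x ≠ 1) : H1 N M x = binomMean N M x := by
  have hf : ∀ i ∈ range M, ((N - 1).choose i : ℝ) * x ^ i * (1 - x) ^ (N - 1 - i) =
      (1 - x) ^ (N - M) * binomWeight N M x i := fun i hi => binomWeight_eq_mul hMN hi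
  rw [binomMean, ← indexMean_const_mul (pow_ne_zero (N - M) (sub_ne_zero.2 hx.symm)), H1, f1, f2,
    indexMean, sum_congr rfl hf]
  congr 1
  exact sum_congr rfl fun i hi => by
    rw [mul_assoc, mul_assoc, ← mul_assoc (_ : ℝ) (x ^ i), hf i hi]

theorem sum_binomWeight_pos (hM : 1 ≤ M) (hMN : M ≤ N) {x : ℝ} (hx : x ∈ Icc (0 : ℝ) 1) :
    0 < ∑ i ∈ range M, binomWeight N M x i := by
  refine sum_pos' (fun i _ => binomWeight_nonneg hx i) ?_
  obtain hx1 | rfl := hx.2.lt_or_eq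
  · refine ⟨0, Finset.mem_range.2 hM, ?_⟩
    have : 0 < 1 - x := sub_pos.2 hx1
    simp only [binomWeight, Nat.choose_zero_right, Nat.cast_one, pow_zero, one_mul]
    positivity
  · refine ⟨M - 1, Finset.mem_range.2 (by omega), ?_⟩
    have : 0 < (N - 1).choose (M - 1) := Nat.choose_pos (by omega)
    simp only [binomWeight, one_pow, sub_self, Nat.sub_self, pow_zero, mul_one]
    exact_mod_cast this

theorem binomMean_zero (hM : 1 ≤ M) : binomMean N M 0 = 0 := by
  rw [binomMean, indexMean_eq_single (k := 0) hM (fun i _ hi => by simp [binomWeight, hi])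
    (by simp [binomWeight]), Nat.cast_zero]

theorem binomMean_one (hM : 1 ≤ M) (hMN : M ≤ N) : binomMean N M 1 = M - 1 := by
  have hk : M - 1 < M := by omega
  have hvanish : ∀ i ∈ range M, i ≠ M - 1 → binomWeight N M 1 i = 0 := fun i hi hik => by
    simp [binomWeight, show M - 1 - i ≠ 0 by rw [Finset.mem_range] at hi; omega]
  have hchoose : (N - 1).choose (M - 1) ≠ 0 := (Nat.choose_pos (by omega)).ne'
  rw [binomMean, indexMean_eq_single hk hvanish (by simpa [binomWeight] using hchoose),
    Nat.cast_pred hM]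

theorem binomMean_monotoneOn : MonotoneOn (binomMean N M) (Ioo 0 1) := by
  intro x hx y hy hxy
  have hx1 : 0 < 1 - x := sub_pos.2 hx.2
  have hy1 : 0 < 1 - y := sub_pos.2 hy.2
  refine indexMean_le_of_tilt (c := ((1 - y) / (1 - x)) ^ (M - 1))
    (r := y * (1 - x) / (x * (1 - y)))
    (fun i _ => binomWeight_nonneg (Ioo_subset_Icc_self hx) i) (by positivity)
    ((one_le_div (by nlinarith [hx.1])).2 (by nlinarith)) fun i hi => ?_
  have hsplit : ∀ z : ℝ, z ^ (M - 1) = z ^ i * z ^ (M - 1 - i) := fun z => by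
    rw [← pow_add]; congr 1; rw [Finset.mem_range] at hi; omega
  rw [binomWeight, binomWeight, div_pow, div_pow, hsplit, hsplit, mul_pow, mul_pow]
  have := hx.1.ne'
  field_simp

theorem binomMean_continuousOn (hM : 1 ≤ M) (hMN : M ≤ N) :
    ContinuousOn (binomMean N M) (Icc 0 1) :=
  continuousOn_indexMean (fun i => by unfold binomWeight; fun_prop)
    fun _ hx => (sum_binomWeight_pos hM hMN hx).ne'

end Binomial

section Geometric

variable {D : ℕ}

theorem sum_range_pow_pos (hD : 1 ≤ D) {q : ℝ} (hq : 0 ≤ q) : 0 < ∑ j ∈ range D, q ^ j :=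
  sum_pos' (fun j _ => pow_nonneg hq j) ⟨0, Finset.mem_range.2 hD, by simp⟩

theorem one_sub_mul_sum_range_natCast_mul_pow (n : ℕ) (q : ℝ) :
    (1 - q) * ∑ j ∈ range n, (j : ℝ) * q ^ j =
      ∑ j ∈ range n, q ^ j - 1 + q ^ n - n * q ^ n := by
  induction n with
  | zero => simp
  | succ n ih => rw [sum_range_succ, sum_range_succ, mul_add, ih]; push_cast; ring

theorem geomMean_nonneg {q : ℝ} (hq : 0 ≤ q) : 0 ≤ geomMean D q :=
  indexMean_nonneg fun j _ => pow_nonneg hq j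

theorem geomMean_zero (hD : 1 ≤ D) : geomMean D 0 = 0 := by
  rw [geomMean, indexMean_eq_single (k := 0) hD (fun j _ hj => zero_pow hj) (by simp),
    Nat.cast_zero]

theorem geomMean_monotoneOn : MonotoneOn (geomMean D) (Ioi 0) := fun q hq q' _ hqq' =>
  indexMean_le_of_tilt (c := 1) (r := q' / q) (fun j _ => pow_nonneg (le_of_lt hq) j) one_pos
    ((one_le_div hq).2 hqq') fun j _ => by
      rw [div_pow, one_mul, div_mul_cancel₀ _ (pow_ne_zero j (ne_of_gt hq))]

theorem geomMean_continuousOn (hD : 1 ≤ D) : ContinuousOn (geomMean D) (Ici 0) :=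
  continuousOn_indexMean (fun j => continuous_pow j) fun _ hq => (sum_range_pow_pos hD hq).ne'

theorem H2_add_one {N : ℕ} (hD : 1 ≤ D) {x : ℝ} (hx : x ∈ Ioo (0 : ℝ) 1) :
    H2 N D x + 1 = x * (N + geomMean D (1 - x)) := by
  have hS := sum_range_pow_pos hD (sub_pos.2 hx.2).le
  have hgeom : x * ∑ j ∈ range D, (1 - x) ^ j = 1 - (1 - x) ^ D := by
    have := geom_sum_mul (1 - x) D
    linear_combination -this
  have hS1 := one_sub_mul_sum_range_natCast_mul_pow D (1 - x)
  rw [sub_sub_cancel] at hS1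
  have hx0 := hx.1.ne'
  rw [H2, geomMean, indexMean, ← hgeom]
  field_simp
  linear_combination -hS1 + ((D : ℝ) - 1) * hgeom

end Geometric

noncomputable def fixedPointGap (N M D : ℕ) (x : ℝ) : ℝ :=
  binomMean N M x + 1 - x * (N + geomMean D (1 - x))

section Map

variable {N M D : ℕ}

theorem natCast_add_geomMean_pos (hN : 0 < N) {q : ℝ} (hq : 0 ≤ q) : 0 < N + geomMean D q := by
  have := geomMean_nonneg (D := D) hq
  positivity

theorem continuousOn_geomMean_one_sub (hD : 1 ≤ D) :
    ContinuousOn (fun x => geomMean D (1 - x)) (Icc 0 1) :=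
  (geomMean_continuousOn hD).comp (continuous_const.sub continuous_id).continuousOn
    fun _ hx => sub_nonneg.2 hx.2

theorem g_eq (hMN : M ≤ N) (hD : 1 ≤ D) {x : ℝ} (hx : x ∈ Ioo (0 : ℝ) 1) :
    g N M D x = (binomMean N M x + 1) / (N + geomMean D (1 - x)) := by
  rw [g, H1_eq_binomMean hMN hx.2.ne, H2_add_one hD hx, mul_div_mul_left _ _ hx.1.ne']

theorem g_sub_self (hM : 1 ≤ M) (hMN : M ≤ N) (hD : 1 ≤ D) {x : ℝ}
    (hx : x ∈ Ioo (0 : ℝ) 1) :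
    g N M D x - x = fixedPointGap N M D x / (N + geomMean D (1 - x)) := by
  have := natCast_add_geomMean_pos (D := D) (by omega : 0 < N) (sub_pos.2 hx.2).le
  rw [g_eq hMN hD hx, fixedPointGap]
  field_simp

theorem g_monotoneOn (hM : 1 ≤ M) (hMN : M ≤ N) (hD : 1 ≤ D) :
    MonotoneOn (g N M D) (Ioo 0 1) := by
  intro x hx y hy hxy
  rw [g_eq hMN hD hx, g_eq hMN hD hy]
  exact div_le_div₀
    (by linarith [binomMean_nonneg (N := N) (M := M) (Ioo_subset_Icc_self hy)])
    (by linarith [binomMean_monotoneOn (N := N) (M := M) hx hy hxy])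
    (natCast_add_geomMean_pos (by omega) (sub_pos.2 hy.2).le)
    (by linarith [geomMean_monotoneOn (D := D) (sub_pos.2 hy.2) (sub_pos.2 hx.2) (by linarith)])

theorem g_continuousOn (hM : 1 ≤ M) (hMN : M ≤ N) (hD : 1 ≤ D) :
    ContinuousOn (g N M D) (Ioo 0 1) := by
  have hcont : ContinuousOn (fun x => (binomMean N M x + 1) / (N + geomMean D (1 - x))) (Icc 0 1) :=
    ((binomMean_continuousOn hM hMN).add continuousOn_const).div
      (continuousOn_const.add (continuousOn_geomMean_one_sub hD))
      fun x hx => (natCast_add_geomMean_pos (by omega) (sub_nonneg.2 hx.2)).ne'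
  exact (hcont.mono Ioo_subset_Icc_self).congr fun x hx => g_eq hMN hD hx

theorem fixedPointGap_eq (hMN : M ≤ N) (hD : 1 ≤ D) {x : ℝ} (hx : x ∈ Ioo (0 : ℝ) 1) :
    fixedPointGap N M D x = H1 N M x - H2 N D x := by
  rw [fixedPointGap, H1_eq_binomMean hMN hx.2.ne, ← H2_add_one hD hx]; ring

theorem fixedPointGap_zero (hM : 1 ≤ M) : fixedPointGap N M D 0 = 1 := by
  simp [fixedPointGap, binomMean_zero hM]

theorem fixedPointGap_one (hM : 1 ≤ M) (hMN : M ≤ N) (hD : 1 ≤ D) :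
    fixedPointGap N M D 1 = M - N := by
  rw [fixedPointGap, binomMean_one hM hMN, sub_self, geomMean_zero hD]; ring

theorem fixedPointGap_continuousOn (hM : 1 ≤ M) (hMN : M ≤ N) (hD : 1 ≤ D) :
    ContinuousOn (fixedPointGap N M D) (Icc 0 1) :=
  ((binomMean_continuousOn hM hMN).add continuousOn_const).sub
    (continuousOn_id.mul (continuousOn_const.add (continuousOn_geomMean_one_sub hD)))

theorem fixedPointGap_ne_zero (hM : 1 ≤ M) (hMN : M < N) (hD : 1 ≤ D) {τ : ℝ}
    (hzero : ∀ z ∈ Ioo (0 : ℝ) 1, fixedPointGap N M D z = 0 → z = τ) {z : ℝ}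
    (hz : z ∈ Icc (0 : ℝ) 1) (hzτ : z ≠ τ) : fixedPointGap N M D z ≠ 0 := by
  obtain rfl | hz0 := hz.1.eq_or_lt
  · simp [fixedPointGap_zero hM]
  obtain rfl | hz1 := hz.2.eq_or_lt
  · rw [fixedPointGap_one hM hMN.le hD, sub_ne_zero]
    exact_mod_cast hMN.ne
  exact fun h => hzτ (hzero z ⟨hz0, hz1⟩ h)

theorem self_lt_g (hM : 1 ≤ M) (hMN : M < N) (hD : 1 ≤ D) {τ : ℝ}
    (hτ : τ ∈ Ioo (0 : ℝ) 1)
    (hzero : ∀ z ∈ Ioo (0 : ℝ) 1, fixedPointGap N M D z = 0 → z = τ) {z : ℝ}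
    (hz : z ∈ Ioo 0 τ) : z < g N M D z := by
  have hsub : Ico 0 τ ⊆ Icc 0 1 := Ico_subset_Icc_self.trans (Icc_subset_Icc_right hτ.2.le)
  have hgap : 0 < fixedPointGap N M D z :=
    isPreconnected_Ico.lt_of_forall_ne ((fixedPointGap_continuousOn hM hMN.le hD).mono hsub)
      (fun y hy => fixedPointGap_ne_zero hM hMN hD hzero (hsub hy) hy.2.ne) ⟨le_rfl, hτ.1⟩
      ⟨hz.1.le, hz.2⟩ (by rw [fixedPointGap_zero hM]; exact one_pos)
  have hz' : z ∈ Ioo (0 : ℝ) 1 := ⟨hz.1, hz.2.trans hτ.2⟩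
  rw [← sub_pos, g_sub_self hM hMN.le hD hz']
  exact div_pos hgap (natCast_add_geomMean_pos (by omega) (sub_pos.2 hz'.2).le)

theorem g_lt_self (hM : 1 ≤ M) (hMN : M < N) (hD : 1 ≤ D) {τ : ℝ}
    (hτ : τ ∈ Ioo (0 : ℝ) 1)
    (hzero : ∀ z ∈ Ioo (0 : ℝ) 1, fixedPointGap N M D z = 0 → z = τ) {z : ℝ}
    (hz : z ∈ Ioo τ 1) : g N M D z < z := by
  have hsub : Ioc τ 1 ⊆ Icc 0 1 := Ioc_subset_Icc_self.trans (Icc_subset_Icc_left hτ.1.le)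
  have hgap : fixedPointGap N M D z < 0 :=
    isPreconnected_Ioc.lt_of_forall_ne (α := ℝᵒᵈ)
      ((fixedPointGap_continuousOn hM hMN.le hD).mono hsub)
      (fun y hy => fixedPointGap_ne_zero hM hMN hD hzero (hsub hy) hy.1.ne') ⟨hτ.2, le_rfl⟩
      ⟨hz.1, hz.2.le⟩
      (by rw [fixedPointGap_one hM hMN.le hD]; exact sub_neg.2 (Nat.cast_lt (α := ℝ).2 hMN))
  have hz' : z ∈ Ioo (0 : ℝ) 1 := ⟨hτ.1.trans hz.1, hz.2⟩
  rw [← sub_neg, g_sub_self hM hMN.le hD hz']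
  exact div_neg_of_neg_of_pos hgap (natCast_add_geomMean_pos (by omega) (sub_pos.2 hz'.2).le)

end Map

theorem stmt16 (N M D : ℕ) (hM : 2 ≤ M) (hMN : M < N) (hD : 1 ≤ D)
    (τs : ℝ) (hτs : τs ∈ Ioo (0:ℝ) 1) (heq : H1 N M τs = H2 N D τs)
    (huniq : ∀ τ ∈ Ioo (0:ℝ) 1, H1 N M τ = H2 N D τ → τ = τs)
    (x : ℕ → ℝ)
    (hx0 : x 0 ∈ Ioo (1 - (((N:ℝ)-1)/((N:ℝ)-1+(D:ℝ))) ^ ((1:ℝ)/(D:ℝ))) 1)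
    (hrec : ∀ n, x (n+1) = g N M D (x n)) :
    Filter.Tendsto x Filter.atTop (nhds τs) := by
  have hM1 : 1 ≤ M := by omega
  have hzero : ∀ z ∈ Ioo (0:ℝ) 1, fixedPointGap N M D z = 0 → z = τs := fun z hz h0 =>
    huniq z hz (sub_eq_zero.1 ((fixedPointGap_eq hMN.le hD hz).symm.trans h0))
  have hfix : g N M D τs = τs := by
    rw [← sub_eq_zero, g_sub_self hM1 hMN.le hD hτs, fixedPointGap_eq hMN.le hD hτs, heq,
      sub_self, zero_div]
  have hx0_pos : 0 < x 0 := by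
    have hN : (1 : ℝ) ≤ N := by exact_mod_cast (by omega : 1 ≤ N)
    have hD' : (0 : ℝ) ≤ D := D.cast_nonneg
    refine lt_of_le_of_lt (sub_nonneg.2 (Real.rpow_le_one ?_ ?_ (by positivity))) hx0.1
    · exact div_nonneg (by linarith) (by linarith)
    · exact div_le_one_of_le₀ (by linarith) (by linarith)
  exact tendsto_fixedPt_of_monotoneOn (g_monotoneOn hM1 hMN.le hD) (g_continuousOn hM1 hMN.le hD)
    hτs hfix (fun z => self_lt_g hM1 hMN hD hτs hzero) (fun z => g_lt_self hM1 hMN hD hτs hzero)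
    ⟨hx0_pos, hx0.2⟩ hrec
end
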